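/- Let $l$ be an odd positive integer and $g, g_1$ integers with $\gcd(g g_1, l) = 1$. If the Jacobi symbol $\left(\frac{g_1 g}{l}\right) = -1$, then the Salié sum $S(g_1, g, l) = 0$. -/

import Mathlib

open Complex Real

/-- The Salié sum `S(a,b,l) = ∑_{h mod l, (h,l)=1} (h/l) e^{2πi(ah + b h̄)/l}`,
where `(·/l)` is the Jacobi symbol and `h̄` is the inverse of `h` mod `l`. -/
noncomputable def salie (a b : ℤ) (l : ℕ) : ℂ :=
  ∑ h ∈ (Finset.range l).filter (fun h => Nat.Coprime h l),
    (jacobiSym (h : ℤ) l : ℂ) *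
      Complex.exp (2 * Real.pi * Complex.I *
        ((a : ℂ) * (h : ℂ) + (b : ℂ) * ((((h : ZMod l)⁻¹).val : ℕ) : ℂ)) / (l : ℂ))

lemma exp_congr' (l : ℕ) (hl : 0 < l) (m n : ℤ) (h : m ≡ n [ZMOD l]) :
    Complex.exp (2 * Real.pi * Complex.I * (m : ℂ) / (l : ℂ)) =
      Complex.exp (2 * Real.pi * Complex.I * (n : ℂ) / (l : ℂ)) := by
  obtain ⟨k, hk⟩ := Int.ModEq.dvd h
  have hl0 : (l : ℂ) ≠ 0 := Nat.cast_ne_zero.mpr hl.ne'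
  rw [Complex.exp_eq_exp_iff_exists_int]
  refine ⟨-k, ?_⟩
  have hk' : (n : ℂ) - m = l * k := by exact_mod_cast congrArg (Int.cast : ℤ → ℂ) hk
  field_simp
  push_cast
  linear_combination -hk'

theorem stmt12 (l : ℕ) (hl : 0 < l) (hodd : Odd l) (g g₁ : ℤ)
    (hco : IsCoprime (g * g₁) (l : ℤ)) (hjac : jacobiSym (g₁ * g) l = -1) :
    salie g₁ g l = 0 := by
  haveI : NeZero l := ⟨hl.ne'⟩
  have hgco : IsCoprime g (l : ℤ) := IsCoprime.of_mul_left_left hco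
  have hg1co : IsCoprime g₁ (l : ℤ) := IsCoprime.of_mul_left_right hco
  have hgu : IsUnit ((g : ZMod l)) := by
    obtain ⟨u, v, huv⟩ := hgco
    refine IsUnit.of_mul_eq_one ((u : ZMod l)) ?_
    have := congrArg (Int.cast : ℤ → ZMod l) huv
    push_cast at this
    rw [ZMod.natCast_self] at this
    linear_combination this
  have hg1u : IsUnit ((g₁ : ZMod l)) := by
    obtain ⟨u, v, huv⟩ := hg1co
    refine IsUnit.of_mul_eq_one ((u : ZMod l)) ?_
    have := congrArg (Int.cast : ℤ → ZMod l) huv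
    push_cast at this
    rw [ZMod.natCast_self] at this
    linear_combination this
  set G : ZMod l := (g : ZMod l) with hGdef
  set G₁ : ZMod l := (g₁ : ZMod l) with hG1def
  have hG : G * G⁻¹ = 1 := ZMod.mul_inv_of_unit _ hgu
  have hG₁ : G₁ * G₁⁻¹ = 1 := ZMod.mul_inv_of_unit _ hg1u
  set c : ZMod l := G * G₁⁻¹ with hcdef
  have hcu : IsUnit c := IsUnit.of_mul_eq_one (G⁻¹ * G₁)
    (by linear_combination (G₁⁻¹ * G₁) * hG + hG₁)
  have hcinv : c⁻¹ = G⁻¹ * G₁ := ZMod.inv_eq_of_mul_eq_one _ _ _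
    (by linear_combination (G₁⁻¹ * G₁) * hG + hG₁)
  have hcc : c * c⁻¹ = 1 := ZMod.mul_inv_of_unit _ hcu
  set φ : ℕ → ℕ := fun h => (c * ((h : ZMod l))⁻¹).val with hφdef
  set s := (Finset.range l).filter (fun h => Nat.Coprime h l) with hsdef
  have hx : ∀ h ∈ s, IsUnit ((h : ZMod l)) := by
    intro h hh
    rw [hsdef, Finset.mem_filter] at hh
    exact (ZMod.isUnit_iff_coprime h l).mpr hh.2
  have hφcast : ∀ h : ℕ, ((φ h : ZMod l)) = c * ((h : ZMod l))⁻¹ := by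
    intro h
    simp [hφdef, ZMod.natCast_val, ZMod.cast_id]
  have hkinv : ∀ h ∈ s, (c * ((h : ZMod l))⁻¹)⁻¹ = c⁻¹ * (h : ZMod l) := by
    intro h hh
    refine ZMod.inv_eq_of_mul_eq_one _ _ _ ?_
    have h1 : ((h : ZMod l))⁻¹ * (h : ZMod l) = 1 := ZMod.inv_mul_of_unit _ (hx h hh)
    linear_combination (c * c⁻¹) * h1 + hcc
  have hφu : ∀ h ∈ s, IsUnit (c * ((h : ZMod l))⁻¹) := by
    intro h hh
    refine IsUnit.of_mul_eq_one (c⁻¹ * (h : ZMod l)) ?_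
    have h1 : ((h : ZMod l))⁻¹ * (h : ZMod l) = 1 := ZMod.inv_mul_of_unit _ (hx h hh)
    linear_combination (c * c⁻¹) * h1 + hcc
  have hmem : ∀ h ∈ s, φ h ∈ s := by
    intro h hh
    rw [hsdef, Finset.mem_filter, Finset.mem_range]
    refine ⟨ZMod.val_lt _, ?_⟩
    have := ZMod.val_coe_unit_coprime (hφu h hh).unit
    rwa [IsUnit.unit_spec] at this
  have hinvol : ∀ h ∈ s, φ (φ h) = h := by
    intro h hh
    have hhlt : h < l := by
      rw [hsdef, Finset.mem_filter, Finset.mem_range] at hh; exact hh.1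
    have e1 : c * ((φ h : ZMod l))⁻¹ = (h : ZMod l) := by
      rw [hφcast, hkinv h hh]
      linear_combination (h : ZMod l) * hcc
    show (c * ((φ h : ZMod l))⁻¹).val = h
    rw [e1, ZMod.val_cast_of_lt hhlt]
  -- Jacobi symbol flip
  have hJg : Int.gcd g l = 1 := Int.isCoprime_iff_gcd_eq_one.mp hgco
  have hJg1 : Int.gcd g₁ l = 1 := Int.isCoprime_iff_gcd_eq_one.mp hg1co
  have hjacmul : jacobiSym g₁ l * jacobiSym g l = -1 := by
    rw [← jacobiSym.mul_left]; exact hjac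
  have hJφ : ∀ h ∈ s, jacobiSym ((φ h : ℕ) : ℤ) l = - jacobiSym (h : ℤ) l := by
    intro h hh
    have hcop : Nat.Coprime h l := by
      rw [hsdef, Finset.mem_filter] at hh; exact hh.2
    have h1 : ((h : ZMod l))⁻¹ * (h : ZMod l) = 1 := ZMod.inv_mul_of_unit _ (hx h hh)
    have hmod : ((φ h : ℤ) * ((h : ℤ) * g₁)) ≡ g [ZMOD l] := by
      refine (ZMod.intCast_eq_intCast_iff _ _ _).mp ?_
      push_cast
      rw [hφcast]
      linear_combination (G * G₁⁻¹ * G₁) * h1 + G * hG₁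
    have E1 : jacobiSym ((φ h : ℕ) : ℤ) l * (jacobiSym (h : ℤ) l * jacobiSym g₁ l)
        = jacobiSym g l := by
      rw [← jacobiSym.mul_left, ← jacobiSym.mul_left]
      exact jacobiSym.mod_left' hmod
    have E3 : jacobiSym (h : ℤ) l ^ 2 = 1 := jacobiSym.sq_one (by
      rw [Int.gcd_natCast_natCast]; exact hcop)
    have E4 : jacobiSym g₁ l ^ 2 = 1 := jacobiSym.sq_one hJg1
    linear_combination (jacobiSym (h : ℤ) l * jacobiSym g₁ l) * E1
      + (jacobiSym (h : ℤ) l) * hjacmul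
      - (jacobiSym ((φ h : ℕ) : ℤ) l * jacobiSym g₁ l ^ 2) * E3
      - (jacobiSym ((φ h : ℕ) : ℤ) l) * E4
  -- exponent congruence
  have hExp : ∀ h ∈ s,
      (g₁ * (φ h : ℤ) + g * ((((φ h : ZMod l))⁻¹).val : ℤ))
        ≡ (g₁ * (h : ℤ) + g * ((((h : ZMod l))⁻¹).val : ℤ)) [ZMOD l] := by
    intro h hh
    refine (ZMod.intCast_eq_intCast_iff _ _ _).mp ?_
    push_cast
    simp only [ZMod.natCast_val, ZMod.cast_id]
    rw [hφcast, hkinv h hh, hcinv, ← hGdef, ← hG1def, hcdef]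
    linear_combination (G * ((h : ZMod l))⁻¹) * hG₁ + (G₁ * (h : ZMod l)) * hG
  -- term flip
  have hterm : ∀ h ∈ s,
      (jacobiSym (h : ℤ) l : ℂ) * Complex.exp (2 * Real.pi * Complex.I *
        ((g₁ : ℂ) * (h : ℂ) + (g : ℂ) * ((((h : ZMod l)⁻¹).val : ℕ) : ℂ)) / (l : ℂ))
      = - ((jacobiSym ((φ h : ℕ) : ℤ) l : ℂ) * Complex.exp (2 * Real.pi * Complex.I *
        ((g₁ : ℂ) * ((φ h : ℕ) : ℂ) + (g : ℂ) * ((((φ h : ZMod l)⁻¹).val : ℕ) : ℂ)) / (l : ℂ))) := by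
    intro h hh
    have eexp := exp_congr' l hl _ _ (hExp h hh)
    push_cast at eexp
    rw [hJφ h hh, eexp]
    push_cast
    ring
  have hflip : salie g₁ g l = - salie g₁ g l := by
    unfold salie
    rw [← Finset.sum_neg_distrib]
    exact Finset.sum_nbij' φ φ hmem hmem hinvol hinvol hterm
  linear_combination hflip / 2
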